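/- Let F : ℕ → ℂ be an arithmetic function with Eratosthenes transform F' = μ * F (Dirichlet convolution with the Möbius function). Define F^ODD := (1_ODD · F') * 1, where 1_ODD is the indicator of odd naturals and * is Dirichlet convolution. Then for all n ≥ 1, F^ODD(n) = F(n_ODD), where n_ODD = n / 2^(v₂(n)). -/
import Mathlib


open Finset

/-- The Eratosthenes transform `F' = μ * F`. -/
noncomputable def eratosthenes (F : ℕ → ℂ) (d : ℕ) : ℂ :=
  ∑ t ∈ d.divisors, F t * (ArithmeticFunction.moebius (d / t) : ℂ)

/-- `F^ODD = (1_ODD · F') * 1`. -/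
noncomputable def oddify (F : ℕ → ℂ) (n : ℕ) : ℂ :=
  ∑ d ∈ n.divisors.filter (fun d => Odd d), eratosthenes F d

lemma erat_inv (F : ℕ → ℂ) (m : ℕ) (hm : 0 < m) :
    ∑ d ∈ m.divisors, eratosthenes F d = F m := by
  refine (ArithmeticFunction.sum_eq_iff_sum_mul_moebius_eq (f := eratosthenes F)
    (g := F)).mpr ?_ m hm
  intro k hk
  rw [Nat.sum_divisorsAntidiagonal' (f := fun d e => (ArithmeticFunction.moebius d : ℂ) * F e)]
  unfold eratosthenes
  exact Finset.sum_congr rfl fun t ht => mul_comm _ _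

/-- `F^ODD(n) = F(n_ODD)` for all `n ≥ 1`. -/
theorem stmt_1 (F : ℕ → ℂ) (n : ℕ) (hn : 1 ≤ n) :
    oddify F n = F (n / 2 ^ (n.factorization 2)) := by
  have hn0 : n ≠ 0 := Nat.one_le_iff_ne_zero.mp hn
  have hm : n / 2 ^ (n.factorization 2) = ordCompl[2] n := rfl
  rw [hm]
  have hset : n.divisors.filter (fun d => Odd d) = (ordCompl[2] n).divisors := by
    ext d
    simp only [Finset.mem_filter, Nat.mem_divisors]
    constructor
    · rintro ⟨⟨hd, -⟩, hodd⟩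
      refine ⟨?_, (Nat.ordCompl_pos 2 hn0).ne'⟩
      have hd2 : d ∣ 2 ^ (n.factorization 2) * ordCompl[2] n := by
        rwa [Nat.ordProj_mul_ordCompl_eq_self n 2]
      exact Nat.Coprime.dvd_of_dvd_mul_left
        ((Nat.coprime_two_right.mpr hodd).pow_right _) hd2
    · rintro ⟨hd, -⟩
      refine ⟨⟨hd.trans (Nat.ordCompl_dvd n 2), hn0⟩, ?_⟩
      rcases Nat.even_or_odd d with he | ho
      · exfalso
        have h2 : 2 ∣ ordCompl[2] n := dvd_trans he.two_dvd hd
        exact (Nat.not_dvd_ordCompl Nat.prime_two hn0) h2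
      · exact ho
  rw [oddify, hset, erat_inv F _ (Nat.ordCompl_pos 2 hn0)]
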